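/- arXiv:math/0110049 — 2 statements merged into one kernel-verified Lean document; each statement's English description precedes it below -/
import Mathlib

section
/- Let ξ be an integer with |ξ| ≥ 2 and let N be a positive integer with N⁶ < c·|ξ| for a sufficiently small absolute constant c. Then for any integer l with 0 < |l| ≤ C|ξ|³, the number of divisors n of l with |n - ξ| ≤ N is at most 3. -/
/-!
If four distinct divisors n₁, …, n₄ of l ≠ 0 lie in [ξ - N, ξ + N], then n₁n₂n₃n₄ divides
l · ∏_{i<j} gcd(nᵢ, nⱼ): their lcm divides l, and adjoining one more number to an lcm loses at
most its gcds with the numbers already there. Each gcd(nᵢ, nⱼ) divides nᵢ - nⱼ, so is at most 2N,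
while |nᵢ| ≥ |ξ|/2. Hence |ξ|⁴ ≤ 2⁴ |l| (2N)⁶ ≤ 1024 C |ξ|³ N⁶, impossible once
N⁶ < |ξ| / (1024 C).
-/

open Finset

section PairwiseGcd

variable {α : Type*} [CommMonoidWithZero α] [NormalizedGCDMonoid α] [DecidableEq α]

theorem gcd_finset_lcm_dvd_prod_gcd (a : α) (s : Finset α) :
    gcd a (s.lcm id) ∣ ∏ b ∈ s, gcd a b := by
  induction s using Finset.induction_on with
  | empty => simp
  | insert b s hb ih =>
    rw [lcm_insert, prod_insert hb]
    calc gcd a (lcm b (s.lcm id)) ∣ gcd a (b * s.lcm id) := gcd_dvd_gcd dvd_rfl (lcm_dvd_mul _ _)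
      _ ∣ gcd a b * gcd a (s.lcm id) := gcd_mul_dvd_mul_gcd a b _
      _ ∣ gcd a b * ∏ b ∈ s, gcd a b := mul_dvd_mul_left _ ih

theorem prod_pair_gcd_insert {a : α} {s : Finset α} (ha : a ∉ s) :
    ∏ p ∈ (insert a s).powersetCard 2, p.gcd id =
      (∏ p ∈ s.powersetCard 2, p.gcd id) * ∏ b ∈ s, gcd a b := by
  have hdisj : Disjoint (s.powersetCard 2) ((s.powersetCard 1).image (insert a)) := by
    refine disjoint_left.2 fun p hp hp' => ?_
    obtain ⟨q, -, rfl⟩ := mem_image.1 hp'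
    exact ha ((mem_powersetCard.1 hp).1 (mem_insert_self a q))
  have hinj : Set.InjOn (insert a) (s.powersetCard 1 : Set (Finset α)) := fun p hp q hq hpq => by
    have notMem {r} (hr : r ∈ s.powersetCard 1) : a ∉ r :=
      fun h => ha ((mem_powersetCard.1 hr).1 h)
    rw [← erase_insert (notMem hp), hpq, erase_insert (notMem hq)]
  rw [powersetCard_succ_insert ha, prod_union hdisj, prod_image hinj, powersetCard_one, prod_map]
  congr 1
  refine prod_congr rfl fun b _ => ?_
  simp only [Function.Embedding.coeFn_mk, gcd_insert, gcd_singleton, id]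
  exact (normalize_associated b).gcd_eq_right a

theorem prod_dvd_lcm_mul_prod_pair_gcd (s : Finset α) :
    ∏ a ∈ s, a ∣ s.lcm id * ∏ p ∈ s.powersetCard 2, p.gcd id := by
  induction s using Finset.induction_on with
  | empty => simp
  | insert a s ha ih =>
    rw [prod_insert ha, lcm_insert, prod_pair_gcd_insert ha]
    set L := s.lcm id
    set P := ∏ p ∈ s.powersetCard 2, p.gcd id
    calc a * ∏ b ∈ s, b ∣ a * L * P := by rw [mul_assoc]; exact mul_dvd_mul_left a ih
      _ ∣ GCDMonoid.lcm a L * GCDMonoid.gcd a L * P := by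
          rw [mul_comm (GCDMonoid.lcm _ _)]; exact mul_dvd_mul_right (gcd_mul_lcm a L).symm.dvd _
      _ ∣ GCDMonoid.lcm a L * (P * ∏ b ∈ s, gcd a b) := by
          rw [mul_assoc, mul_comm (GCDMonoid.gcd _ _)]
          exact mul_dvd_mul_left _ (mul_dvd_mul_left _ (gcd_finset_lcm_dvd_prod_gcd a s))

end PairwiseGcd

theorem Int.finset_gcd_le_abs_sub {p : Finset ℤ} {u v : ℤ} (hu : u ∈ p) (hv : v ∈ p)
    (huv : u ≠ v) : p.gcd id ≤ |u - v| :=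
  Int.le_of_dvd (abs_pos.2 (sub_ne_zero.2 huv))
    ((dvd_abs _ _).2 (dvd_sub (gcd_dvd hu) (gcd_dvd hv)))

theorem Int.prod_abs_le_of_forall_dvd {s : Finset ℤ} {l D : ℤ} (hl : l ≠ 0) (hdvd : ∀ n ∈ s, n ∣ l)
    (hD : ∀ u ∈ s, ∀ v ∈ s, |u - v| ≤ D) : ∏ n ∈ s, |n| ≤ |l| * D ^ (#s).choose 2 := by
  set G := ∏ p ∈ s.powersetCard 2, p.gcd id
  have hG : ∀ p ∈ s.powersetCard 2, 0 < p.gcd id ∧ p.gcd id ≤ D := by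
    intro p hp
    obtain ⟨hps, hcard⟩ := mem_powersetCard.1 hp
    obtain ⟨u, v, huv, rfl⟩ := card_eq_two.1 hcard
    refine ⟨(Int.nonneg_of_normalize_eq_self normalize_gcd).lt_of_ne fun h => huv ?_, ?_⟩
    · have hzero := Finset.gcd_eq_zero_iff.1 h.symm
      exact (hzero u (by simp)).trans (hzero v (by simp)).symm
    · exact (Int.finset_gcd_le_abs_sub (by simp) (by simp) huv).trans
        (hD u (hps (by simp)) v (hps (by simp)))
  have hGpos : 0 < G := prod_pos fun p hp => (hG p hp).1
  have hdiv : ∏ n ∈ s, n ∣ l * G :=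
    (prod_dvd_lcm_mul_prod_pair_gcd s).trans (mul_dvd_mul_right (Finset.lcm_dvd hdvd) G)
  have hGD : G ≤ D ^ (#s).choose 2 := by
    rw [← card_powersetCard, ← prod_const]
    exact prod_le_prod (fun p hp => (hG p hp).1.le) (fun p hp => (hG p hp).2)
  calc ∏ n ∈ s, |n| = |∏ n ∈ s, n| := (abs_prod s id).symm
    _ ≤ |l * G| :=
      Int.le_of_dvd (abs_pos.2 (mul_ne_zero hl hGpos.ne')) ((abs_dvd_abs _ _).2 hdiv)
    _ = |l| * G := by rw [abs_mul, abs_of_pos hGpos]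
    _ ≤ |l| * D ^ (#s).choose 2 := mul_le_mul_of_nonneg_left hGD (abs_nonneg l)

theorem Int.abs_le_two_mul_abs_of_mem_Icc {ξ N n : ℤ} (hn : n ∈ Icc (ξ - N) (ξ + N))
    (hN : 2 * N ≤ |ξ|) : |ξ| ≤ 2 * |n| := by
  have := mem_Icc.1 hn
  have := abs_sub_abs_le_abs_sub ξ n
  have := abs_sub_le_iff.2 (⟨by linarith, by linarith⟩ : ξ - n ≤ N ∧ n - ξ ≤ N)
  linarith

theorem Int.abs_pow_card_le_of_subset_Icc_of_dvd {t : Finset ℤ} {ξ N l : ℤ} (hl : l ≠ 0)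
    (hN : 2 * N ≤ |ξ|) (ht : t ⊆ (Icc (ξ - N) (ξ + N)).filter (· ∣ l)) :
    |ξ| ^ #t ≤ 2 ^ #t * (|l| * (2 * N) ^ (#t).choose 2) := by
  have hmem : ∀ n ∈ t, n ∈ Icc (ξ - N) (ξ + N) ∧ n ∣ l := fun n hn => mem_filter.1 (ht hn)
  have hlower : |ξ| ^ #t ≤ 2 ^ #t * ∏ n ∈ t, |n| := by
    rw [← prod_const, ← prod_const, ← prod_mul_distrib]
    exact prod_le_prod (fun _ _ => abs_nonneg ξ) fun n hn =>
      Int.abs_le_two_mul_abs_of_mem_Icc (hmem n hn).1 hN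
  refine hlower.trans (mul_le_mul_of_nonneg_left ?_ (by positivity))
  refine Int.prod_abs_le_of_forall_dvd hl (fun n hn => (hmem n hn).2) fun u hu v hv => ?_
  have := mem_Icc.1 (hmem u hu).1
  have := mem_Icc.1 (hmem v hv).1
  exact abs_sub_le_iff.2 ⟨by linarith, by linarith⟩

theorem few_divisors_near_xi :
    ∀ C : ℝ, 0 < C → ∃ c : ℝ, 0 < c ∧
      ∀ ξ N l : ℤ, 2 ≤ |ξ| → 0 < N → ((N : ℝ)) ^ 6 < c * |(ξ : ℝ)| →
        l ≠ 0 → |(l : ℝ)| ≤ C * |(ξ : ℝ)| ^ 3 →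
        ((Finset.Icc (ξ - N) (ξ + N)).filter (fun n : ℤ => n ∣ l)).card ≤ 3 := by
  intro C hC
  set c : ℝ := min (1 / 2) (1 / (1024 * C))
  refine ⟨c, by positivity, fun ξ N l hξ hN hNc hl hlC => ?_⟩
  have hX : (0 : ℝ) < |(ξ : ℝ)| := by exact_mod_cast (by omega : (0 : ℤ) < |ξ|)
  have hNξ : 2 * N ≤ |ξ| := by
    have : (N : ℝ) < 1 / 2 * |(ξ : ℝ)| := calc
      (N : ℝ) ≤ N ^ 6 := le_self_pow₀ (by exact_mod_cast hN) (by norm_num)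
      _ < c * |(ξ : ℝ)| := hNc
      _ ≤ 1 / 2 * |(ξ : ℝ)| := mul_le_mul_of_nonneg_right (min_le_left _ _) hX.le
    have : ((2 * N : ℤ) : ℝ) ≤ ((|ξ| : ℤ) : ℝ) := by push_cast; linarith
    exact_mod_cast this
  by_contra! hcard
  obtain ⟨t, hts, ht⟩ := exists_subset_card_eq (show 4 ≤ _ from hcard)
  have hξl : |(ξ : ℝ)| ^ 4 ≤ 1024 * |(l : ℝ)| * N ^ 6 := by
    have := Int.abs_pow_card_le_of_subset_Icc_of_dvd hl hNξ hts
    rw [ht, show (4 : ℕ).choose 2 = 6 from rfl] at this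
    exact_mod_cast this.trans_eq (by ring)
  have hCc : C * c ≤ 1 / 1024 :=
    (mul_le_mul_of_nonneg_left (min_le_right _ _) hC.le).trans_eq (by field_simp)
  refine lt_irrefl (|(ξ : ℝ)| ^ 4) ?_
  calc
    |(ξ : ℝ)| ^ 4 ≤ 1024 * |(l : ℝ)| * N ^ 6 := hξl
    _ ≤ 1024 * (C * |(ξ : ℝ)| ^ 3) * N ^ 6 := by gcongr
    _ < 1024 * (C * |(ξ : ℝ)| ^ 3) * (c * |(ξ : ℝ)|) := by gcongr
    _ = 1024 * (C * c) * |(ξ : ℝ)| ^ 4 := by ring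
    _ ≤ |(ξ : ℝ)| ^ 4 := by nlinarith [pow_pos hX 4]
end

section
/- If n₁, n₂, n₃, n₄ are pairwise distinct nonzero integers each dividing a nonzero integer l, then the product n₁·n₂·n₃·n₄ divides l · ∏_{1 ≤ i < j ≤ 4} gcd(nᵢ, nⱼ). -/
/-!
Take the nᵢ one at a time. If `m` is the lcm of those already taken, then
`m * x = gcd m x * lcm m x` up to a unit, and `gcd m x` divides the product of the `gcd y x` over
the elements `y` already taken, since `m ∣ ∏ y`. By induction the product of the nᵢ divides their
lcm times the product of all pairwise gcds, and the lcm divides `l`.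
-/

namespace List

variable {α : Type*} [CommMonoidWithZero α] [GCDMonoid α]

def lcm (s : List α) : α :=
  s.foldr GCDMonoid.lcm 1

def prodPairwiseGcd : List α → α
  | [] => 1
  | a :: s => (s.map (gcd a)).prod * prodPairwiseGcd s

theorem lcm_cons (a : α) (s : List α) : (a :: s).lcm = GCDMonoid.lcm a s.lcm := rfl

theorem lcm_dvd {s : List α} {L : α} (h : ∀ x ∈ s, x ∣ L) : s.lcm ∣ L := by
  induction s with
  | nil => exact one_dvd L
  | cons a s ih =>
    simp only [mem_cons, forall_eq_or_imp] at h
    exact lcm_dvd_iff.mpr ⟨h.1, ih h.2⟩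

theorem gcd_lcm_dvd_prod_map_gcd (s : List α) (x : α) :
    gcd s.lcm x ∣ (s.map (gcd x)).prod := by
  induction s with
  | nil => exact (gcd_one_left' x).dvd
  | cons a s ih =>
    calc gcd (GCDMonoid.lcm a s.lcm) x
        ∣ gcd (a * s.lcm) x :=
          gcd_dvd_gcd (_root_.lcm_dvd (dvd_mul_right _ _) (dvd_mul_left _ _)) dvd_rfl
      _ ∣ gcd x (a * s.lcm) := (gcd_comm' _ _).dvd
      _ ∣ gcd x a * gcd x s.lcm := gcd_mul_dvd_mul_gcd x a s.lcm
      _ ∣ gcd x a * (s.map (gcd x)).prod := mul_dvd_mul_left _ ((gcd_comm' x _).dvd.trans ih)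

theorem prod_dvd_lcm_mul_prodPairwiseGcd (s : List α) : s.prod ∣ s.lcm * s.prodPairwiseGcd := by
  induction s with
  | nil => simp [prodPairwiseGcd]
  | cons x s ih =>
    have step : x * s.lcm ∣ (s.map (gcd x)).prod * (x :: s).lcm := by
      rw [lcm_cons, ← (gcd_mul_lcm x s.lcm).dvd_iff_dvd_left]
      exact mul_dvd_mul_right ((gcd_comm' x _).dvd.trans (gcd_lcm_dvd_prod_map_gcd s x)) _
    calc x * s.prod
        ∣ x * s.lcm * s.prodPairwiseGcd := by rw [mul_assoc]; exact mul_dvd_mul_left x ih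
      _ ∣ (s.map (gcd x)).prod * (x :: s).lcm * s.prodPairwiseGcd := mul_dvd_mul_right step _
      _ = (x :: s).lcm * (x :: s).prodPairwiseGcd := by
        rw [prodPairwiseGcd, mul_comm (s.map _).prod, mul_assoc]

theorem prod_dvd_mul_prodPairwiseGcd {s : List α} {L : α} (h : ∀ x ∈ s, x ∣ L) :
    s.prod ∣ L * s.prodPairwiseGcd :=
  (prod_dvd_lcm_mul_prodPairwiseGcd s).trans (mul_dvd_mul_right (lcm_dvd h) _)

end List

theorem product_of_divisors_divides_general (n₁ n₂ n₃ n₄ l : ℤ)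
    (d1 : n₁ ∣ l) (d2 : n₂ ∣ l) (d3 : n₃ ∣ l) (d4 : n₄ ∣ l) :
    n₁ * n₂ * n₃ * n₄ ∣
      l * (Int.gcd n₁ n₂ * Int.gcd n₁ n₃ * Int.gcd n₁ n₄ *
           Int.gcd n₂ n₃ * Int.gcd n₂ n₄ * Int.gcd n₃ n₄ : ℤ) := by
  have h := List.prod_dvd_mul_prodPairwiseGcd (s := [n₁, n₂, n₃, n₄]) (L := l)
    (by simp [d1, d2, d3, d4])
  simp only [List.prod_cons, List.prod_nil, List.prodPairwiseGcd, List.map_cons,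
    List.map_nil, mul_one, ← Int.coe_gcd, mul_assoc] at h ⊢
  exact h

theorem product_of_divisors_divides (n₁ n₂ n₃ n₄ l : ℤ)
    (h1 : n₁ ≠ 0) (h2 : n₂ ≠ 0) (h3 : n₃ ≠ 0) (h4 : n₄ ≠ 0) (hl : l ≠ 0)
    (h12 : n₁ ≠ n₂) (h13 : n₁ ≠ n₃) (h14 : n₁ ≠ n₄)
    (h23 : n₂ ≠ n₃) (h24 : n₂ ≠ n₄) (h34 : n₃ ≠ n₄)
    (d1 : n₁ ∣ l) (d2 : n₂ ∣ l) (d3 : n₃ ∣ l) (d4 : n₄ ∣ l) :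
    n₁ * n₂ * n₃ * n₄ ∣
      l * (Int.gcd n₁ n₂ * Int.gcd n₁ n₃ * Int.gcd n₁ n₄ *
           Int.gcd n₂ n₃ * Int.gcd n₂ n₄ * Int.gcd n₃ n₄ : ℤ) :=
  product_of_divisors_divides_general n₁ n₂ n₃ n₄ l d1 d2 d3 d4
end
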